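/- Let C_* be the two-term complex 0 → D_{i+1} →^∂ D_i → 0 (in degrees i+1 and i) where ∂ is an isomorphism of projective kH-modules. Then for n > i, the resolution module M(C_*, n) is isomorphic as a kG-module to D_i ⊗_k k[Z]/(Z^p), and in particular is a projective kG-module. -/

import Mathlib

open MonoidAlgebra

/-!
Only the summands `C_{2j} ⊕ C_{2j+1}^{p-1}` with `j = ⌊i/2⌋` (and, for odd `i`, also `C_{i+1}`)
survive, and on them `Z` pushes `p` copies of `C_i`, identified with each other through the
isomorphism `∂`, along a chain `C_i → C_i → ⋯ → C_i → 0`. So `M ≅ C_i^p` with `Z` acting as the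
shift `(f₀, …, f_{p-1}) ↦ (0, f₀, …, f_{p-2})`. Such a module is induced from slot `0`: a
`kH`-linear map `g` out of `C_i` extends to the `kG`-linear map `m ↦ ∑ Z^r • g(m_r)`, which
commutes with `Z` because `Z^p = 0` in characteristic `p`. Lifting through a surjection by
projectivity of `C_i` over `kH` and extending shows that `M` is projective over `kG`.
-/

namespace MonoidAlgebra

variable {A G : Type*}

instance charP [Semiring A] [Monoid G] (p : ℕ) [CharP A p] : CharP (MonoidAlgebra A G) p :=
  charP_of_injective_ringHom (f := singleOneRingHom) (fun _ _ ↦ single_right_inj.mp) p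

theorem single_one_smul_eq_smul [Semiring A] [Monoid G] {N : Type*} [AddCommMonoid N]
    [Module (MonoidAlgebra A G) N] [Module A N] [IsScalarTower A (MonoidAlgebra A G) N]
    (a : A) (x : N) : (single 1 a : MonoidAlgebra A G) • x = a • x := by
  rw [show (single 1 a : MonoidAlgebra A G) = a • 1 by
      rw [one_def, smul_single, smul_eq_mul, mul_one],
    smul_assoc, one_smul]

end MonoidAlgebra

section CyclicZ

variable (A : Type*) [Ring A] (p : ℕ)

/-- `Z = σ - 1` for the generator `σ` of `C_p`; in characteristic `p`,
`A[C_p] = A[Z]/(Z^p)`. -/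
noncomputable def cyclicZ : MonoidAlgebra A (Multiplicative (ZMod p)) :=
  single (Multiplicative.ofAdd 1) 1 - 1

variable {A p}

theorem commute_single_one_cyclicZ (a : A) : Commute (single 1 a) (cyclicZ A p) :=
  .sub_right (by simp [Commute, SemiconjBy, single_mul_single]) (.one_right _)

theorem cyclicZ_pow_char [Fact p.Prime] [CharP A p] : cyclicZ A p ^ p = 0 := by
  rw [cyclicZ, sub_pow_char_of_commute p (.one_right _), one_pow, single_pow, one_pow,
    ← ofAdd_nsmul, nsmul_one, ZMod.natCast_self, ofAdd_zero, ← one_def, sub_self]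

variable {M N : Type*} [AddCommGroup M] [AddCommGroup N]
  [Module (MonoidAlgebra A (Multiplicative (ZMod p))) M] [Module A M]
  [IsScalarTower A (MonoidAlgebra A (Multiplicative (ZMod p))) M]
  [Module (MonoidAlgebra A (Multiplicative (ZMod p))) N] [Module A N]
  [IsScalarTower A (MonoidAlgebra A (Multiplicative (ZMod p))) N]

theorem cyclicZ_pow_smul_smul_comm (k : ℕ) (a : A) (x : N) :
    cyclicZ A p ^ k • a • x = a • cyclicZ A p ^ k • x := by
  rw [← single_one_smul_eq_smul (G := Multiplicative (ZMod p)) a x,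
    ← single_one_smul_eq_smul (G := Multiplicative (ZMod p)) a, smul_smul, smul_smul,
    ((commute_single_one_cyclicZ a).pow_right k).eq]

def LinearMap.liftOfCommuteCyclicZ [NeZero p] (L : M →ₗ[A] N)
    (hL : ∀ x, L (cyclicZ A p • x) = cyclicZ A p • L x) :
    M →ₗ[MonoidAlgebra A (Multiplicative (ZMod p))] N where
  toFun := L
  map_add' := L.map_add
  map_smul' b x := by
    change L (b • x) = b • L x
    have hpow (k : ℕ) (x : M) :
        L ((cyclicZ A p + 1) ^ k • x) = (cyclicZ A p + 1) ^ k • L x := by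
      induction k generalizing x with
      | zero => simp
      | succ k ih => simp only [pow_succ', mul_smul, add_smul, one_smul, map_add, hL, ih]
    induction b using MonoidAlgebra.induction_on generalizing x with
    | of g =>
      have hg : of A _ g = (cyclicZ A p + 1) ^ g.toAdd.val := by
        rw [cyclicZ, sub_add_cancel, MonoidAlgebra.single_pow, one_pow, ← ofAdd_nsmul,
          nsmul_one, ZMod.natCast_zmod_val, ofAdd_toAdd, of_apply]
      rw [hg]
      exact hpow _ x
    | add b c hb hc => simp only [add_smul, map_add, hb, hc]
    | smul a b ih =>
      have hab : a • b = (MonoidAlgebra.single 1 a : MonoidAlgebra A _) * b := by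
        rw [← smul_eq_mul, single_one_smul_eq_smul]
      rw [hab, mul_smul, mul_smul, single_one_smul_eq_smul, single_one_smul_eq_smul, ← ih,
        L.map_smul]

end CyclicZ

section FinShift

variable (A P : Type*) [Semiring A] [AddCommMonoid P] [Module A P] (p : ℕ)

/-- The action of `Z` on `P ⊗ k[Z]/(Z^p)` in the basis `1, Z, …, Z^{p-1}`. -/
def finShift : (Fin p → P) →ₗ[A] (Fin p → P) :=
  LinearMap.pi fun r => if h : (r : ℕ) = 0 then 0 else LinearMap.proj ⟨r - 1, by omega⟩

variable {A P p}

theorem finShift_apply (f : Fin p → P) (r : Fin p) :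
    finShift A P p f r = if h : (r : ℕ) = 0 then 0 else f ⟨r - 1, by omega⟩ := by
  simp only [finShift, LinearMap.pi_apply]
  split_ifs <;> rfl

theorem finShift_apply_zero {q : ℕ} (f : Fin (q + 1) → P) : finShift A P _ f 0 = 0 := by
  simp [finShift_apply]

theorem finShift_apply_succ {q : ℕ} (f : Fin (q + 1) → P) (t : Fin q) :
    finShift A P _ f t.succ = f t.castSucc := by
  rw [finShift_apply, dif_neg (by simp)]
  rfl

theorem finShift_single_castSucc {q : ℕ} (t : Fin q) (x : P) :
    finShift A P _ (Pi.single t.castSucc x) = Pi.single t.succ x := by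
  ext r
  cases r using Fin.cases with
  | zero => simp [finShift_apply_zero, Fin.succ_ne_zero]
  | succ s => simp [finShift_apply_succ, Pi.single_apply]

theorem finShift_single_last {q : ℕ} (x : P) :
    finShift A P _ (Pi.single (Fin.last q) x) = 0 := by
  ext r
  cases r using Fin.cases with
  | zero => simp [finShift_apply_zero]
  | succ s => simp [finShift_apply_succ, Fin.castSucc_ne_last]

end FinShift

section ShiftModule

variable {A : Type*} [Ring A] {p : ℕ} {P M N : Type*} [AddCommGroup P] [Module A P]
  [AddCommGroup M] [Module (MonoidAlgebra A (Multiplicative (ZMod p))) M] [Module A M]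
  [AddCommGroup N] [Module (MonoidAlgebra A (Multiplicative (ZMod p))) N] [Module A N]
  [IsScalarTower A (MonoidAlgebra A (Multiplicative (ZMod p))) N]
  (e : M ≃ₗ[A] (Fin p → P))

theorem cyclicZ_pow_smul_symm_single [NeZero p]
    (he : ∀ m, e (cyclicZ A p • m) = finShift A P p (e m)) (x : P) (r : Fin p) :
    cyclicZ A p ^ (r : ℕ) • e.symm (Pi.single 0 x) = e.symm (Pi.single r x) := by
  obtain ⟨q, rfl⟩ := Nat.exists_eq_add_one_of_ne_zero (NeZero.ne p)
  induction r using Fin.induction with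
  | zero => simp
  | succ t ih =>
    rw [Fin.val_succ, pow_succ', mul_smul, ← Fin.val_castSucc, ih, ← e.symm_apply_apply (_ • _),
      he, e.apply_symm_apply, finShift_single_castSucc]

noncomputable def finShiftLiftₗ (g : P →ₗ[A] N) : M →ₗ[A] N where
  toFun m := ∑ r : Fin p, cyclicZ A p ^ (r : ℕ) • g (e m r)
  map_add' m m' := by simp [Finset.sum_add_distrib]
  map_smul' a m := by simp [Finset.smul_sum, cyclicZ_pow_smul_smul_comm]

theorem finShiftLiftₗ_cyclicZ_smul [Fact p.Prime] [CharP A p]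
    (he : ∀ m, e (cyclicZ A p • m) = finShift A P p (e m)) (g : P →ₗ[A] N) (m : M) :
    finShiftLiftₗ e g (cyclicZ A p • m) = cyclicZ A p • finShiftLiftₗ e g m := by
  have hZp := cyclicZ_pow_char (A := A) (p := p)
  obtain ⟨q, rfl⟩ := Nat.exists_eq_add_one_of_ne_zero (Fact.out : p.Prime).ne_zero
  simp only [finShiftLiftₗ, LinearMap.coe_mk, AddHom.coe_mk, he, Finset.smul_sum, smul_smul,
    ← pow_succ']
  rw [Fin.sum_univ_succ, Fin.sum_univ_castSucc, finShift_apply_zero, map_zero, smul_zero,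
    zero_add, Fin.val_last, hZp, zero_smul, add_zero]
  simp [finShift_apply_succ]

noncomputable def finShiftLift [IsScalarTower A (MonoidAlgebra A (Multiplicative (ZMod p))) M]
    [Fact p.Prime] [CharP A p]
    (he : ∀ m, e (cyclicZ A p • m) = finShift A P p (e m)) (g : P →ₗ[A] N) :
    M →ₗ[MonoidAlgebra A (Multiplicative (ZMod p))] N :=
  (finShiftLiftₗ e g).liftOfCommuteCyclicZ (finShiftLiftₗ_cyclicZ_smul e he g)

theorem projective_of_equiv_finShift [IsScalarTower A (MonoidAlgebra A (Multiplicative (ZMod p))) M]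
    [Fact p.Prime] [CharP A p] [Module.Projective A P]
    (he : ∀ m, e (cyclicZ A p • m) = finShift A P p (e m)) :
    Module.Projective (MonoidAlgebra A (Multiplicative (ZMod p))) M := by
  refine .of_lifting_property'' fun f hf => ?_
  obtain ⟨g, hg⟩ := Module.projective_lifting_property (f.restrictScalars A)
    (e.symm.toLinearMap ∘ₗ LinearMap.single A (fun _ => P) 0) hf
  refine ⟨finShiftLift e he g, LinearMap.ext fun m => ?_⟩
  have hfg (x : P) : f (g x) = e.symm (Pi.single 0 x) := LinearMap.congr_fun hg x
  calc f (finShiftLift e he g m)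
      = ∑ r : Fin p, cyclicZ A p ^ (r : ℕ) • e.symm (Pi.single 0 (e m r)) := by
        simp [finShiftLift, LinearMap.liftOfCommuteCyclicZ, finShiftLiftₗ, hfg]
    _ = ∑ r, e.symm (Pi.single r (e m r)) := by
        simp only [cyclicZ_pow_smul_symm_single e he]
    _ = m := by rw [← map_sum, Finset.univ_sum_single, e.symm_apply_apply]

theorem exists_equiv_finShift_of_bijective [NeZero p] (φ : (Fin p → P) →ₗ[A] M)
    (hφ : Function.Bijective φ)
    (hchain : ∀ r x, cyclicZ A p • φ (Pi.single r x) = φ (finShift A P p (Pi.single r x))) :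
    ∃ e : M ≃ₗ[A] (Fin p → P), ∀ m, e (cyclicZ A p • m) = finShift A P p (e m) := by
  refine ⟨(LinearEquiv.ofBijective φ hφ).symm, fun m => ?_⟩
  obtain ⟨f, rfl⟩ := hφ.2 m
  rw [LinearEquiv.ofBijective_symm_apply_apply, ← Finset.univ_sum_single f]
  simp only [map_sum, Finset.smul_sum, hchain]
  rw [← map_sum, ← map_sum, LinearEquiv.ofBijective_symm_apply_apply]

end ShiftModule

namespace DirectSum

variable {R ι : Type*} [Semiring R] [DecidableEq ι] {X : ι → Type*} [∀ j, AddCommMonoid (X j)]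
  [∀ j, Module R (X j)]

theorem lof_bijective_of_subsingleton {j₀ : ι} (h : ∀ j, j ≠ j₀ → Subsingleton (X j)) :
    Function.Bijective (lof R ι X j₀) := by
  refine ⟨of_injective j₀, fun y => ?_⟩
  induction y using DirectSum.induction_on with
  | zero => exact ⟨0, map_zero _⟩
  | of j v =>
    by_cases hj : j = j₀
    · subst hj; exact ⟨v, rfl⟩
    · have := h j hj
      exact ⟨0, by rw [map_zero, Subsingleton.elim v 0, map_zero]⟩
  | add y y' hy hy' =>
    obtain ⟨⟨x, rfl⟩, ⟨x', rfl⟩⟩ := And.intro hy hy'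
    exact ⟨x + x', map_add _ _ _⟩

theorem coprod_lof_bijective_of_subsingleton {j₀ j₁ : ι} (hne : j₀ ≠ j₁)
    (h : ∀ j, j ≠ j₀ → j ≠ j₁ → Subsingleton (X j)) :
    Function.Bijective ((lof R ι X j₀).coprod (lof R ι X j₁)) := by
  constructor
  · rintro ⟨a, b⟩ ⟨a', b'⟩ hab
    have h₀ := congr($hab j₀)
    have h₁ := congr($hab j₁)
    simp only [LinearMap.coprod_apply, add_apply, lof_eq_of, of_eq_same, of_eq_of_ne _ _ _ hne,
      of_eq_of_ne _ _ _ hne.symm, add_zero, zero_add] at h₀ h₁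
    rw [h₀, h₁]
  · intro y
    induction y using DirectSum.induction_on with
    | zero => exact ⟨0, map_zero _⟩
    | of j v =>
      by_cases hj₀ : j = j₀
      · subst hj₀; exact ⟨(v, 0), by simp [lof_eq_of]⟩
      by_cases hj₁ : j = j₁
      · subst hj₁; exact ⟨(0, v), by simp [lof_eq_of]⟩
      have := h j hj₀ hj₁
      exact ⟨0, by rw [map_zero, Subsingleton.elim v 0, map_zero]⟩
    | add y y' hy hy' =>
      obtain ⟨⟨x, rfl⟩, ⟨x', rfl⟩⟩ := And.intro hy hy'
      exact ⟨x + x', map_add _ _ _⟩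

end DirectSum

def Fin.snocLinearEquiv (R : Type*) [Semiring R] {n : ℕ} (M : Type*) [AddCommMonoid M]
    [Module R M] : (M × (Fin n → M)) ≃ₗ[R] (Fin (n + 1) → M) where
  __ := Fin.snocEquiv fun _ => M
  map_add' x y := funext <| Fin.lastCases (by simp) (by simp)
  map_smul' c x := funext <| Fin.lastCases (by simp) (by simp)

section SplitEquiv

variable {A P Q : Type*} [Semiring A] [AddCommMonoid P] [Module A P] [AddCommMonoid Q]
  [Module A Q] {q : ℕ} (E : Q ≃ₗ[A] P)

noncomputable def splitLastEquiv : (Fin (q + 1) → P) ≃ₗ[A] P × (Fin q → Q) :=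
  (Fin.snocLinearEquiv A P).symm ≪≫ₗ
    (LinearEquiv.refl A P).prodCongr (.piCongrRight fun _ => E.symm)

theorem splitLastEquiv_single_last (x : P) :
    splitLastEquiv E (Pi.single (Fin.last q) x) = (x, 0) := by
  ext <;> simp [splitLastEquiv, Fin.snocLinearEquiv, Fin.init, Fin.castSucc_ne_last]

theorem splitLastEquiv_single_castSucc (t : Fin q) (x : P) :
    splitLastEquiv E (Pi.single t.castSucc x) = (0, Pi.single t (E.symm x)) := by
  ext s
  · simp [splitLastEquiv, Fin.snocLinearEquiv, (Fin.castSucc_ne_last t).symm]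
  · by_cases hs : s = t
    · subst hs; simp [splitLastEquiv, Fin.snocLinearEquiv, Fin.init]
    · simp [splitLastEquiv, Fin.snocLinearEquiv, Fin.init, hs]

variable (Z₀ Z₁ : Type*) [AddCommMonoid Z₀] [Module A Z₀] [Subsingleton Z₀] [AddCommMonoid Z₁]
  [Module A Z₁] [Subsingleton Z₁]

noncomputable def splitZeroEquiv : (Fin (q + 1) → P) ≃ₗ[A] (Z₀ × (Fin q → P)) × (Q × Z₁) :=
  letI := uniqueOfSubsingleton (0 : Z₀)
  letI := uniqueOfSubsingleton (0 : Z₁)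
  (Fin.consLinearEquiv A _).symm ≪≫ₗ LinearEquiv.prodComm A _ _ ≪≫ₗ
    LinearEquiv.uniqueProd.symm.prodCongr (E.symm ≪≫ₗ LinearEquiv.prodUnique.symm)

theorem splitZeroEquiv_single_zero (x : P) :
    splitZeroEquiv E Z₀ Z₁ (Pi.single (0 : Fin (q + 1)) x) = (0, (E.symm x, 0)) := by
  ext <;> simp [splitZeroEquiv, Fin.tail] <;> exact Subsingleton.elim _ _

theorem splitZeroEquiv_single_succ (t : Fin q) (x : P) :
    splitZeroEquiv E Z₀ Z₁ (Pi.single t.succ x) = ((0, Pi.single t x), 0) := by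
  ext <;> simp [splitZeroEquiv, Fin.tail, Pi.single_apply] <;> exact Subsingleton.elim _ _

end SplitEquiv

section ResolutionModule

open DirectSum

variable {A : Type*} [Ring A] {p : ℕ} {C : ℕ → Type*} [∀ j, AddCommGroup (C j)]
  [∀ j, Module A (C j)] {d : ∀ j, C (j + 1) →ₗ[A] C j} {n : ℕ∞} {M : Type*} [AddCommGroup M]
  [Module A M]
  {ιe : (j : ℕ) → ((j : ℕ∞) < n) → (C (2 * j) →ₗ[A] M)}
  {ιo : (j : ℕ) → ((j : ℕ∞) < n) → Fin (p - 1) → (C (2 * j + 1) →ₗ[A] M)}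

variable (ιe ιo) in
/-- The `kH`-module decomposition `⨁_{j<n} C_{2j} ⊕ C_{2j+1}^{p-1} → M` of the resolution
module `M(C_*, n)`. -/
def decompMap :
    (⨁ j : {j : ℕ // (j : ℕ∞) < n}, C (2 * j.1) × (Fin (p - 1) → C (2 * j.1 + 1))) →ₗ[A] M :=
  DirectSum.toModule A {j : ℕ // (j : ℕ∞) < n} M fun j =>
    (ιe j.1 j.2).coprod (LinearMap.lsum A (fun _ : Fin (p - 1) => C (2 * j.1 + 1)) ℕ (ιo j.1 j.2))

theorem decompMap_lof_inl (j : {j : ℕ // (j : ℕ∞) < n}) (a : C (2 * j.1)) :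
    decompMap ιe ιo (DirectSum.lof A _ _ j (a, 0)) = ιe j.1 j.2 a := by
  simp [decompMap]

theorem decompMap_lof_single (j : {j : ℕ // (j : ℕ∞) < n}) (t : Fin (p - 1)) (y : C (2 * j.1 + 1)) :
    decompMap ιe ιo (DirectSum.lof A _ _ j (0, Pi.single t y)) = ιo j.1 j.2 t y := by
  simp only [decompMap, toModule_lof, LinearMap.coprod_apply, map_zero, zero_add,
    LinearMap.lsum_apply, LinearMap.sum_apply, LinearMap.comp_apply, LinearMap.proj_apply]
  rw [Fintype.sum_eq_single t fun s hs => by rw [Pi.single_eq_of_ne hs, map_zero],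
    Pi.single_eq_same]

theorem cyclicZ_smul_ιe_eq_zero [Module (MonoidAlgebra A (Multiplicative (ZMod p))) M]
    (hp : 2 ≤ p) (hZ0 : ∀ (h : ((0 : ℕ) : ℕ∞) < n) m, cyclicZ A p • ιe 0 h m = 0)
    (hZe : ∀ (j : ℕ) (hj1 : ((j + 1 : ℕ) : ℕ∞) < n) (hj : (j : ℕ∞) < n) m,
      cyclicZ A p • ιe (j + 1) hj1 m = ιo j hj ⟨0, by omega⟩ (d (2 * j + 1) m))
    {j₀ : ℕ} (hdzero : ∀ j, j ≠ 2 * j₀ → d j = 0) (h₀ : (j₀ : ℕ∞) < n) (x : C (2 * j₀)) :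
    cyclicZ A p • ιe j₀ h₀ x = 0 := by
  cases j₀ with
  | zero => exact hZ0 h₀ x
  | succ j =>
    rw [hZe j h₀ (lt_of_le_of_lt (by simp) h₀), hdzero _ (by omega), LinearMap.zero_apply,
      map_zero]

/-- Slots `0, …, p-2` of the chain are the odd summands `C_{2j₀+1}` (identified with `C_{2j₀}`
through `∂`), slot `p-1` is `C_{2j₀}`. -/
theorem exists_equiv_finShift_of_even [Module (MonoidAlgebra A (Multiplicative (ZMod p))) M]
    (hp : 2 ≤ p) {j₀ : ℕ} (h₀ : (j₀ : ℕ∞) < n)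
    (hconc : ∀ j, j ≠ 2 * j₀ → j ≠ 2 * j₀ + 1 → Subsingleton (C j))
    (hdecomp : Function.Bijective (decompMap ιe ιo))
    (hd : Function.Bijective (d (2 * j₀)))
    (hZe : ∀ x, cyclicZ A p • ιe j₀ h₀ x = 0)
    (hZo : ∀ (t : Fin (p - 1)) (ht : (t : ℕ) + 1 < p - 1) m,
      cyclicZ A p • ιo j₀ h₀ t m = ιo j₀ h₀ ⟨t + 1, ht⟩ m)
    (hZlast : ∀ m, cyclicZ A p • ιo j₀ h₀ ⟨p - 2, by omega⟩ m = ιe j₀ h₀ (d (2 * j₀) m)) :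
    ∃ e : M ≃ₗ[A] (Fin p → C (2 * j₀)), ∀ m, e (cyclicZ A p • m) = finShift A _ p (e m) := by
  obtain ⟨q, rfl⟩ : ∃ q, p = q + 2 := ⟨p - 2, by omega⟩
  let E := LinearEquiv.ofBijective (d (2 * j₀)) hd
  have hZo' (t : Fin q) m : cyclicZ A (q + 2) • ιo j₀ h₀ t.castSucc m = ιo j₀ h₀ t.succ m :=
    hZo t.castSucc (by simp) m
  have hZlast' m : cyclicZ A (q + 2) • ιo j₀ h₀ (Fin.last q) m = ιe j₀ h₀ (E m) := hZlast m
  let φ := decompMap ιe ιo ∘ₗ lof A _ _ ⟨j₀, h₀⟩ ∘ₗ (splitLastEquiv (q := q + 1) E).toLinearMap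
  have hφlast x : φ (Pi.single (Fin.last (q + 1)) x) = ιe j₀ h₀ x := by
    simp only [φ, LinearMap.comp_apply, LinearEquiv.coe_coe, splitLastEquiv_single_last]
    exact decompMap_lof_inl (ιe := ιe) (ιo := ιo) ⟨j₀, h₀⟩ x
  have hφcast t x : φ (Pi.single t.castSucc x) = ιo j₀ h₀ t (E.symm x) := by
    simp only [φ, LinearMap.comp_apply, LinearEquiv.coe_coe, splitLastEquiv_single_castSucc]
    exact decompMap_lof_single (ιe := ιe) (ιo := ιo) ⟨j₀, h₀⟩ t _
  refine exists_equiv_finShift_of_bijective φ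
    (hdecomp.comp ((lof_bijective_of_subsingleton (R := A) ?_).comp (splitLastEquiv E).bijective))
    fun r x => ?_
  · rintro ⟨j, hj⟩ hne
    have hj₀ : j ≠ j₀ := fun h => hne (Subtype.ext h)
    have := hconc (2 * j) (by omega) (by omega)
    have := hconc (2 * j + 1) (by omega) (by omega)
    infer_instance
  cases r using Fin.lastCases with
  | last => rw [finShift_single_last, map_zero, hφlast, hZe]
  | cast t =>
    rw [finShift_single_castSucc, hφcast]
    cases t using Fin.lastCases with
    | last => rw [Fin.succ_last, hφlast, hZlast', E.apply_symm_apply]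
    | cast s => rw [Fin.succ_castSucc, hφcast, hZo']

/-- Slot `0` of the chain is `C_{2j₀+2}` (identified with `C_{2j₀+1}` through `∂`), slots
`1, …, p-1` are the odd summands `C_{2j₀+1}`. -/
theorem exists_equiv_finShift_of_odd [Module (MonoidAlgebra A (Multiplicative (ZMod p))) M]
    (hp : 2 ≤ p) {j₀ : ℕ} (h₀ : (j₀ : ℕ∞) < n) (h₁ : ((j₀ + 1 : ℕ) : ℕ∞) < n)
    (hconc : ∀ j, j ≠ 2 * j₀ + 1 → j ≠ 2 * j₀ + 1 + 1 → Subsingleton (C j))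
    (hdecomp : Function.Bijective (decompMap ιe ιo))
    (hd : Function.Bijective (d (2 * j₀ + 1))) (hd₀ : d (2 * j₀) = 0)
    (hZe : ∀ m, cyclicZ A p • ιe (j₀ + 1) h₁ m = ιo j₀ h₀ ⟨0, by omega⟩ (d (2 * j₀ + 1) m))
    (hZo : ∀ (t : Fin (p - 1)) (ht : (t : ℕ) + 1 < p - 1) m,
      cyclicZ A p • ιo j₀ h₀ t m = ιo j₀ h₀ ⟨t + 1, ht⟩ m)
    (hZlast : ∀ m, cyclicZ A p • ιo j₀ h₀ ⟨p - 2, by omega⟩ m = ιe j₀ h₀ (d (2 * j₀) m)) :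
    ∃ e : M ≃ₗ[A] (Fin p → C (2 * j₀ + 1)), ∀ m, e (cyclicZ A p • m) = finShift A _ p (e m) := by
  obtain ⟨q, rfl⟩ : ∃ q, p = q + 2 := ⟨p - 2, by omega⟩
  let E := LinearEquiv.ofBijective (d (2 * j₀ + 1)) hd
  have hZe' m : cyclicZ A (q + 2) • ιe (j₀ + 1) h₁ (E.symm m) = ιo j₀ h₀ (0 : Fin (q + 1)) m := by
    rw [hZe]
    exact congrArg _ (E.apply_symm_apply m)
  have hZo' (t : Fin q) m : cyclicZ A (q + 2) • ιo j₀ h₀ t.castSucc m = ιo j₀ h₀ t.succ m :=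
    hZo t.castSucc (by simp) m
  have hZlast' m : cyclicZ A (q + 2) • ιo j₀ h₀ (Fin.last q) m = 0 := by
    have h := hZlast m
    rw [hd₀, LinearMap.zero_apply, map_zero] at h
    exact h
  have := hconc (2 * j₀) (by omega) (by omega)
  have := hconc (2 * (j₀ + 1) + 1) (by omega) (by omega)
  let split := splitZeroEquiv (q := q + 1) E (C (2 * j₀)) (Fin (q + 1) → C (2 * (j₀ + 1) + 1))
  let φ := decompMap ιe ιo ∘ₗ (lof A _ _ ⟨j₀, h₀⟩).coprod (lof A _ _ ⟨j₀ + 1, h₁⟩) ∘ₗ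
    split.toLinearMap
  have hφzero x : φ (Pi.single 0 x) = ιe (j₀ + 1) h₁ (E.symm x) := by
    simp only [φ, LinearMap.comp_apply, LinearEquiv.coe_coe, split, splitZeroEquiv_single_zero,
      LinearMap.coprod_apply, map_zero, zero_add]
    exact decompMap_lof_inl (ιe := ιe) (ιo := ιo) ⟨j₀ + 1, h₁⟩ _
  have hφsucc t x : φ (Pi.single t.succ x) = ιo j₀ h₀ t x := by
    simp only [φ, LinearMap.comp_apply, LinearEquiv.coe_coe, split, splitZeroEquiv_single_succ,
      LinearMap.coprod_apply, map_zero, add_zero]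
    exact decompMap_lof_single (ιe := ιe) (ιo := ιo) ⟨j₀, h₀⟩ t x
  refine exists_equiv_finShift_of_bijective φ (hdecomp.comp
    ((coprod_lof_bijective_of_subsingleton (R := A) (by simp) ?_).comp split.bijective))
    fun r x => ?_
  · rintro ⟨j, hj⟩ hj₀ hj₁
    have hj₀ : j ≠ j₀ := fun h => hj₀ (Subtype.ext h)
    have hj₁ : j ≠ j₀ + 1 := fun h => hj₁ (Subtype.ext h)
    have := hconc (2 * j) (by omega) (by omega)
    have := hconc (2 * j + 1) (by omega) (by omega)
    infer_instance
  cases r using Fin.cases with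
  | zero =>
    rw [hφzero, hZe', show (0 : Fin (q + 2)) = Fin.castSucc 0 from rfl, finShift_single_castSucc,
      hφsucc]
  | succ t =>
    rw [hφsucc]
    cases t using Fin.lastCases with
    | last => rw [hZlast', Fin.succ_last, finShift_single_last, map_zero]
    | cast s => rw [hZo', Fin.succ_castSucc, finShift_single_castSucc, hφsucc]

end ResolutionModule

/-- Let `C_*` be the two-term complex `0 → D_{i+1} → D_i → 0`
(concentrated in degrees `i+1` and `i`), where `∂ = d i` is an isomorphism of
projective `kH`-modules.  Then for `n > i` the resolution module `M = M(C_*, n)`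
is isomorphic as a `kG`-module (`kG = kH ⊗ k[Z]/(Z^p)`) to
`D_i ⊗_k k[Z]/(Z^p)` — i.e. to the free `k[Z]/(Z^p)`-module `D_i^p` with `Z`
acting as the shift — and in particular `M` is a projective `kG`-module. -/
theorem resolution_module_two_term_complex
    (k : Type) [Field k] (p : ℕ) (hp : p.Prime) [CharP k p]
    (H : Type) [Group H]
    (C : ℕ → Type) [∀ j, AddCommGroup (C j)] [∀ j, Module (MonoidAlgebra k H) (C j)]
    (d : ∀ j, C (j + 1) →ₗ[MonoidAlgebra k H] C j)
    (i : ℕ)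
    -- the complex is concentrated in degrees `i` and `i+1`, with `∂ = d i` an
    -- isomorphism of projective modules
    (hconc : ∀ j, j ≠ i → j ≠ i + 1 → Subsingleton (C j))
    (hdzero : ∀ j, j ≠ i → d j = 0)
    (hiso : Function.Bijective (d i))
    (hproj : Module.Projective (MonoidAlgebra k H) (C i))
    (n : ℕ∞) (hn : (i : ℕ∞) < n)
    (M : Type) [AddCommGroup M]
    [Module (MonoidAlgebra (MonoidAlgebra k H) (Multiplicative (ZMod p))) M]
    [Module (MonoidAlgebra k H) M]
    [IsScalarTower (MonoidAlgebra k H)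
      (MonoidAlgebra (MonoidAlgebra k H) (Multiplicative (ZMod p))) M]
    (ιe : (j : ℕ) → ((j : ℕ∞) < n) → (C (2 * j) →ₗ[MonoidAlgebra k H] M))
    (ιo : (j : ℕ) → ((j : ℕ∞) < n) → Fin (p - 1) →
      (C (2 * j + 1) →ₗ[MonoidAlgebra k H] M))
    (hdecomp : Function.Bijective
      (DirectSum.toModule (MonoidAlgebra k H) {j : ℕ // (j : ℕ∞) < n} M
        (fun j => LinearMap.coprod (ιe j.1 j.2)
          (LinearMap.lsum (MonoidAlgebra k H)
            (fun _ : Fin (p - 1) => C (2 * j.1 + 1)) ℕ (fun t => ιo j.1 j.2 t)))))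
    (Z : MonoidAlgebra (MonoidAlgebra k H) (Multiplicative (ZMod p)))
    (hZ : Z = MonoidAlgebra.single (Multiplicative.ofAdd (1 : ZMod p))
      (1 : MonoidAlgebra k H) - 1)
    (hZ0 : ∀ (h : ((0 : ℕ) : ℕ∞) < n) (m : C (2 * 0)), Z • ιe 0 h m = 0)
    (hZe : ∀ (j : ℕ) (hj1 : ((j + 1 : ℕ) : ℕ∞) < n) (hj : ((j : ℕ) : ℕ∞) < n)
      (m : C (2 * (j + 1))),
      Z • ιe (j + 1) hj1 m = ιo j hj ⟨0, by have := hp.two_le; omega⟩ (d (2 * j + 1) m))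
    (hZo : ∀ (j : ℕ) (hj : ((j : ℕ) : ℕ∞) < n) (t : Fin (p - 1))
      (ht : (t : ℕ) + 1 < p - 1) (m : C (2 * j + 1)),
      Z • ιo j hj t m = ιo j hj ⟨(t : ℕ) + 1, ht⟩ m)
    (hZlast : ∀ (j : ℕ) (hj : ((j : ℕ) : ℕ∞) < n) (hl : p - 2 < p - 1)
      (m : C (2 * j + 1)),
      Z • ιo j hj ⟨p - 2, hl⟩ m = ιe j hj (d (2 * j) m)) :
    Module.Projective (MonoidAlgebra (MonoidAlgebra k H) (Multiplicative (ZMod p))) M ∧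
    ∃ e : M ≃ₗ[MonoidAlgebra k H] (Fin p → C i),
      (∀ m : M, e (Z • m) ⟨0, by have := hp.two_le; omega⟩ = 0) ∧
      (∀ (m : M) (r : Fin p) (hr : 0 < (r : ℕ)),
        e (Z • m) r = e m ⟨(r : ℕ) - 1, by have := r.2; omega⟩) := by
  have hp₂ := hp.two_le
  have := Fact.mk hp
  obtain rfl : Z = cyclicZ (MonoidAlgebra k H) p := hZ
  obtain ⟨e, he⟩ : ∃ e : M ≃ₗ[MonoidAlgebra k H] (Fin p → C i),
      ∀ m, e (cyclicZ _ p • m) = finShift _ _ p (e m) := by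
    obtain ⟨j₀, rfl | rfl⟩ := Nat.even_or_odd' i
    · have h₀ : (j₀ : ℕ∞) < n := lt_of_le_of_lt (Nat.cast_le.mpr (by omega)) hn
      exact exists_equiv_finShift_of_even hp₂ h₀ hconc hdecomp hiso
        (cyclicZ_smul_ιe_eq_zero hp₂ hZ0 hZe hdzero h₀) (hZo j₀ h₀) (hZlast j₀ h₀ _)
    · have h₀ : (j₀ : ℕ∞) < n := lt_of_le_of_lt (Nat.cast_le.mpr (by omega)) hn
      have h₁ : ((j₀ + 1 : ℕ) : ℕ∞) < n := lt_of_le_of_lt (Nat.cast_le.mpr (by omega)) hn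
      exact exists_equiv_finShift_of_odd hp₂ h₀ h₁ hconc hdecomp hiso (hdzero _ (by omega))
        (hZe j₀ h₁ h₀) (hZo j₀ h₀) (hZlast j₀ h₀ _)
  exact ⟨projective_of_equiv_finShift e he, e, fun m => by simp [he, finShift_apply],
    fun m r hr => by simp [he, finShift_apply, hr.ne']⟩
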